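/- If $z \in \mathbb{C}^4$ has at least one zero entry, then $\|z\|_{\mathsf{X}} = |z_1| + |z_2| + |z_3| + |z_4|$. -/

import Mathlib

open Complex Real

noncomputable def Xfun (z : Fin 4 → ℂ) (σ : ℝ) : ℝ :=
  ‖z 0 * Complex.exp (σ * Complex.I) + (starRingEnd ℂ) (z 3)‖ +
  ‖z 1 * Complex.exp (σ * Complex.I) + (starRingEnd ℂ) (z 2)‖

noncomputable def Xnorm (z : Fin 4 → ℂ) : ℝ := ⨆ σ : ℝ, Xfun z σ

noncomputable def phase (z : Fin 4 → ℂ) : ℝ :=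
  (Complex.arg (z 0) + Complex.arg (z 3)) - (Complex.arg (z 1) + Complex.arg (z 2))

/-! The two summands of `Xfun z σ` are bounded by `‖z 0‖ + ‖z 3‖` and `‖z 1‖ + ‖z 2‖` by the
triangle inequality. When a pair contains a zero its summand equals the bound for every `σ`, and
the other summand attains its bound once `σ` rotates `z i * exp (σ * I)` onto the ray of
`conj (z j)`; so the supremum equals the sum and is attained. -/

namespace Complex

theorem norm_mul_exp_mul_I_add_le (a b : ℂ) (σ : ℝ) :
    ‖a * exp (σ * I) + b‖ ≤ ‖a‖ + ‖b‖ := by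
  simpa only [norm_mul, norm_exp_ofReal_mul_I, mul_one] using norm_add_le (a * exp (σ * I)) b

theorem norm_mul_exp_mul_I_add_of_eq_zero {a b : ℂ} (h : a = 0 ∨ b = 0) (σ : ℝ) :
    ‖a * exp (σ * I) + b‖ = ‖a‖ + ‖b‖ := by
  rcases h with rfl | rfl <;> simp

theorem exists_norm_mul_exp_mul_I_add_eq (a b : ℂ) :
    ∃ σ : ℝ, ‖a * exp (σ * I) + b‖ = ‖a‖ + ‖b‖ := by
  refine ⟨b.arg - a.arg, ?_⟩
  have rotate : a * exp ((b.arg - a.arg : ℝ) * I) = ‖a‖ * exp (b.arg * I) :=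
    calc a * exp ((b.arg - a.arg : ℝ) * I)
        = ‖a‖ * exp (a.arg * I) * exp ((b.arg - a.arg : ℝ) * I) := by
          rw [norm_mul_exp_arg_mul_I]
      _ = ‖a‖ * exp (b.arg * I) := by
          rw [mul_assoc, ← exp_add]
          congr 2
          push_cast
          ring
  calc ‖a * exp ((b.arg - a.arg : ℝ) * I) + b‖
      = ‖((‖a‖ + ‖b‖ : ℝ) : ℂ) * exp (b.arg * I)‖ := by
        rw [rotate, ofReal_add, add_mul, norm_mul_exp_arg_mul_I]
    _ = ‖a‖ + ‖b‖ := by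
        rw [norm_mul, norm_exp_ofReal_mul_I, mul_one, norm_real, Real.norm_of_nonneg (by positivity)]

end Complex

theorem Xfun_le_sum_norm (z : Fin 4 → ℂ) (σ : ℝ) : Xfun z σ ≤ ∑ i, ‖z i‖ := by
  have h₀₃ := norm_mul_exp_mul_I_add_le (z 0) (starRingEnd ℂ (z 3)) σ
  have h₁₂ := norm_mul_exp_mul_I_add_le (z 1) (starRingEnd ℂ (z 2)) σ
  rw [norm_conj] at h₀₃ h₁₂
  rw [Xfun, Fin.sum_univ_four]
  linarith

theorem bddAbove_range_Xfun (z : Fin 4 → ℂ) : BddAbove (Set.range (Xfun z)) :=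
  ⟨_, Set.forall_mem_range.2 (Xfun_le_sum_norm z)⟩

theorem Xfun_eq_sum_norm {z : Fin 4 → ℂ} {σ : ℝ}
    (h₀₃ : ‖z 0 * exp (σ * I) + starRingEnd ℂ (z 3)‖ = ‖z 0‖ + ‖starRingEnd ℂ (z 3)‖)
    (h₁₂ : ‖z 1 * exp (σ * I) + starRingEnd ℂ (z 2)‖ = ‖z 1‖ + ‖starRingEnd ℂ (z 2)‖) :
    Xfun z σ = ∑ i, ‖z i‖ := by
  rw [Xfun, h₀₃, h₁₂, norm_conj, norm_conj, Fin.sum_univ_four]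
  ring

theorem exists_Xfun_eq_sum_norm {z : Fin 4 → ℂ} (h : ∃ i, z i = 0) :
    ∃ σ, Xfun z σ = ∑ i, ‖z i‖ := by
  obtain ⟨i, hi⟩ := h
  have hzero : (z 0 = 0 ∨ starRingEnd ℂ (z 3) = 0) ∨ (z 1 = 0 ∨ starRingEnd ℂ (z 2) = 0) := by
    simp only [map_eq_zero]
    fin_cases i <;> simp_all
  rcases hzero with h₀₃ | h₁₂
  · obtain ⟨σ, h₁₂⟩ := exists_norm_mul_exp_mul_I_add_eq (z 1) (starRingEnd ℂ (z 2))
    exact ⟨σ, Xfun_eq_sum_norm (norm_mul_exp_mul_I_add_of_eq_zero h₀₃ σ) h₁₂⟩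
  · obtain ⟨σ, h₀₃⟩ := exists_norm_mul_exp_mul_I_add_eq (z 0) (starRingEnd ℂ (z 3))
    exact ⟨σ, Xfun_eq_sum_norm h₀₃ (norm_mul_exp_mul_I_add_of_eq_zero h₁₂ σ)⟩

theorem stmt_6 (z : Fin 4 → ℂ) (h : ∃ i, z i = 0) :
    Xnorm z = ∑ i : Fin 4, ‖z i‖ := by
  obtain ⟨σ, hσ⟩ := exists_Xfun_eq_sum_norm h
  exact le_antisymm (ciSup_le (Xfun_le_sum_norm z)) (hσ ▸ le_ciSup (bddAbove_range_Xfun z) σ)
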